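/- Let K be a locally compact Hausdorff space that is not σ-compact but possesses a dense σ-compact subset (i.e., K is of class K_II). Then there is no standard frame in C₀(K): there exist no index set J, no family (x_j)_{j∈J} of elements of C₀(K), and no constants 0 < c₁ ≤ c₂ such that for every x ∈ C₀(K) the family of functions (|x_j|²·|x|²)_{j∈J} is summable in the norm of C₀(K) and its sum S satisfies c₁·|x(t)|² ≤ S(t) ≤ c₂·|x(t)|² for all t ∈ K. -/

import Mathlib

/-!
If `(x j)` were a standard frame, then testing the lower frame bound against a function equal to
`1` at `t` shows that some `x j` does not vanish at `t`, so the supports of the `x j` cover `K`.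
Testing summability against functions equal to `1` on the compact pieces of the dense σ-compact
set shows that only countably many `x j` are nonzero, since a nonzero `x j` cannot vanish on a
dense set. The support of a function vanishing at infinity is σ-compact, being the union of the
compact sets `{t | 1/(n+1) ≤ ‖f t‖}`; hence `K` would be a countable union of σ-compact sets.
-/

open ZeroAtInfty Set Filter Function

universe u

namespace ZeroAtInftyContinuousMap

variable {K β : Type*} [TopologicalSpace K] [NormedAddCommGroup β]

instance : ContinuousEvalConst C₀(K, β) K β where
  continuous_eval_const t :=
    (continuous_eval_const (F := BoundedContinuousFunction K β) t).comp isometry_toBCF.continuous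

theorem tsum_apply {J : Type*} {f : J → C₀(K, β)} (hf : Summable f) (t : K) :
    (∑' j, f j) t = ∑' j, f j t :=
  hf.map_tsum ({ toFun := fun f => f t, map_zero' := rfl, map_add' := fun _ _ => rfl } :
    C₀(K, β) →+ β) (continuous_eval_const t)

theorem exists_apply_ne_zero_of_dense {D : Set K} (hD : Dense D) {f : C₀(K, β)} (hf : f ≠ 0) :
    ∃ t ∈ D, f t ≠ 0 := by
  by_contra! h
  exact hf <| DFunLike.coe_injective <| Continuous.ext_on hD (map_continuous f) continuous_const h

theorem isCompact_setOf_le_norm (f : C₀(K, β)) {ε : ℝ} (hε : 0 < ε) :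
    IsCompact {t | ε ≤ ‖f t‖} := by
  have hsmall : {t | ‖f t‖ < ε} ∈ cocompact K := by
    simpa [Metric.ball] using zero_at_infty f (Metric.ball_mem_nhds 0 hε)
  obtain ⟨C, hC, hsub⟩ := mem_cocompact'.mp hsmall
  exact hC.of_isClosed_subset (isClosed_le continuous_const (map_continuous f).norm)
    (by simpa [compl_ofPred] using hsub)

theorem isSigmaCompact_support (f : C₀(K, β)) : IsSigmaCompact (support f) := by
  have hsupport : support f = ⋃ n : ℕ, {t | 1 / ((n : ℝ) + 1) ≤ ‖f t‖} := by
    ext t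
    simp only [mem_support, mem_iUnion, mem_ofPred_eq, ← norm_pos_iff]
    exact ⟨fun h => (exists_nat_one_div_lt h).imp fun _ => le_of_lt,
      fun ⟨n, hn⟩ => lt_of_lt_of_le (by positivity) hn⟩
  rw [hsupport]
  exact isSigmaCompact_iUnion_of_isCompact _ fun n => f.isCompact_setOf_le_norm (by positivity)

theorem sigmaCompactSpace_of_countable_setOf_ne_zero {J : Type*} {x : J → C₀(K, β)}
    (hx : {j | x j ≠ 0}.Countable) (hcover : ∀ t, ∃ j, x j t ≠ 0) : SigmaCompactSpace K := by
  rw [← isSigmaCompact_univ_iff]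
  have hunion : univ = ⋃ j ∈ {j | x j ≠ 0}, support (x j) := by
    refine (eq_univ_of_forall fun t => ?_).symm
    obtain ⟨j, hj⟩ := hcover t
    exact mem_biUnion (fun h => hj (by simp [h])) hj
  rw [hunion]
  exact isSigmaCompact_biUnion hx fun j _ => isSigmaCompact_support (x j)

theorem exists_eqOn_one_of_isCompact {𝕜 : Type*} [RCLike 𝕜] [LocallyCompactSpace K] [T2Space K]
    {C : Set K} (hC : IsCompact C) : ∃ v : C₀(K, 𝕜), EqOn v 1 C := by
  obtain ⟨f, hf1, -, hfc, -⟩ :=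
    exists_continuous_one_zero_of_isCompact hC isClosed_empty (disjoint_empty C)
  have hcs : HasCompactSupport fun t => (f t : 𝕜) := hfc.comp_left RCLike.ofReal_zero
  refine ⟨⟨⟨fun t => (f t : 𝕜), by fun_prop⟩, hcs.is_zero_at_infty⟩, fun t ht => ?_⟩
  simp [hf1 ht]

theorem star_mul_self_mul_star_mul_self_apply (f v : C₀(K, ℂ)) (t : K) :
    (star f * f * (star v * v)) t = ((‖f t‖ ^ 2 * ‖v t‖ ^ 2 : ℝ) : ℂ) := by
  simp [Complex.conj_mul']

end ZeroAtInftyContinuousMap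

section Frame

open ZeroAtInftyContinuousMap

variable {K : Type*} [TopologicalSpace K] {J : Type*} {x : J → C₀(K, ℂ)}

theorem exists_apply_ne_zero_of_le_tsum_re {c : ℝ} (hc : 0 < c) {v : C₀(K, ℂ)} {t : K}
    (hv : v t ≠ 0) (hs : Summable fun j => star (x j) * x j * (star v * v))
    (hle : c * ‖v t‖ ^ 2 ≤ ((∑' j, star (x j) * x j * (star v * v)) t).re) :
    ∃ j, x j t ≠ 0 := by
  by_contra! h
  have hzero : (∑' j, star (x j) * x j * (star v * v)) t = 0 := by
    simp [tsum_apply hs, star_mul_self_mul_star_mul_self_apply, h]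
  rw [hzero, Complex.zero_re] at hle
  have hpos : 0 < c * ‖v t‖ ^ 2 := by positivity
  linarith

theorem countable_setOf_ne_zero_of_summable [LocallyCompactSpace K] [T2Space K] {D : Set K}
    (hD : IsSigmaCompact D) (hDense : Dense D)
    (hs : ∀ v : C₀(K, ℂ), Summable fun j => star (x j) * x j * (star v * v)) :
    {j | x j ≠ 0}.Countable := by
  obtain ⟨S, hS, rfl⟩ := hD
  choose v hv using fun n => exists_eqOn_one_of_isCompact (𝕜 := ℂ) (hS n)
  refine (countable_iUnion fun n => (hs (v n)).countable_support).mono fun j hj => ?_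
  obtain ⟨t, ht, hjt⟩ := exists_apply_ne_zero_of_dense hDense hj
  obtain ⟨n, hn⟩ := mem_iUnion.mp ht
  refine mem_iUnion.mpr ⟨n, fun h0 => hjt ?_⟩
  simpa [star_mul_self_mul_star_mul_self_apply, hv n hn] using congrArg (· t) h0

end Frame

/-- Let `K` be a locally compact Hausdorff space which is not `σ`-compact but has a dense
`σ`-compact subset (class `K_II`). Then there is no standard frame in `C₀(K)`: there are no
index set `J`, family `(x j)` in `C₀(K)` and constants `0 < c₁ ≤ c₂` such that for every
`x ∈ C₀(K)` the family of functions `(|x_j|² · |x|²)` (realized in the `C*`-algebra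
`C₀(K, ℂ)` as `star (x j) * x j * (star x * x)`) is summable in the norm of `C₀(K)` and
its sum `S` satisfies `c₁ · |x t|² ≤ S t ≤ c₂ · |x t|²` for all `t ∈ K`. -/
theorem no_standard_frame_of_KII
    (K : Type*) [TopologicalSpace K] [LocallyCompactSpace K] [T2Space K]
    (hK : ¬ SigmaCompactSpace K)
    (hdense : ∃ D : Set K, IsSigmaCompact D ∧ Dense D) :
    ¬ ∃ (J : Type u) (x : J → C₀(K, ℂ)) (c₁ c₂ : ℝ), 0 < c₁ ∧ c₁ ≤ c₂ ∧
        ∀ v : C₀(K, ℂ),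
          Summable (fun j : J => star (x j) * x j * (star v * v)) ∧
          ∀ t : K,
            c₁ * ‖v t‖ ^ 2 ≤ ((∑' j : J, star (x j) * x j * (star v * v)) t).re ∧
            ((∑' j : J, star (x j) * x j * (star v * v)) t).re ≤ c₂ * ‖v t‖ ^ 2 := by
  rintro ⟨J, x, c₁, c₂, hc₁, -, hframe⟩
  obtain ⟨D, hD, hDense⟩ := hdense
  have hcover : ∀ t, ∃ j, x j t ≠ 0 := fun t => by
    obtain ⟨v, hv⟩ := ZeroAtInftyContinuousMap.exists_eqOn_one_of_isCompact (𝕜 := ℂ)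
      (isCompact_singleton (x := t))
    have hvt : v t = 1 := hv rfl
    exact exists_apply_ne_zero_of_le_tsum_re hc₁ (hvt ▸ one_ne_zero) (hframe v).1
      ((hframe v).2 t).1
  exact hK <| ZeroAtInftyContinuousMap.sigmaCompactSpace_of_countable_setOf_ne_zero
    (countable_setOf_ne_zero_of_summable hD hDense fun v => (hframe v).1) hcover
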